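/- Let c₂ = ∑_{l=1}^∞ 2^{−l}·l·ln l and p†_d(l) = 2^{−l}·(1 + d(l·ln l − c₂·l/2)) for l ≥ 1. There exists d₀ > 0 such that for all 0 < d < d₀ and every integer l ≥ 1: | p†_d(l) / ∑_{l'≥l} p†_d(l') − 1/2 | ≤ 0.05. -/

import Mathlib

/-- `c₂ = ∑_{l≥1} 2^{-l} l ln l`. -/
noncomputable def c2 : ℝ := ∑' l : ℕ+, (2 : ℝ) ^ (-((l : ℕ) : ℤ)) * (l : ℝ) * Real.log (l : ℝ)

/-- The near-optimal run-length distribution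
`p†_d(l) = 2^{-l}(1 + d(l ln l - c₂ l / 2))`. -/
noncomputable def pdag (d : ℝ) (l : ℕ+) : ℝ :=
  (2 : ℝ) ^ (-((l : ℕ) : ℤ)) * (1 + d * ((l : ℝ) * Real.log (l : ℝ) - c2 * (l : ℝ) / 2))

/-!
Write `p†_d(l) = 2^{-l} g(l)` with `g(x) = 1 + d (x ln x - c x / 2)`. For any positive sequence
`p` with `|2 p(m+1) - p(m)| ≤ ε p(m)`, the series of `2 p(m+1) - p(m)` over `m ≥ l` sums to
`S - 2 p(l)`, where `S` is the tail sum; so `|S - 2 p(l)| ≤ ε S` and the hazard rate `p(l) / S`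
is within `ε / 2` of `1 / 2`. It therefore suffices that `g` varies slowly:
`|g(m+1) - g(m)| ≤ g(m) / 10`. The increment of `x ln x` is at most `x + 1`, which the Fenchel
inequality `x ln x ≥ x t - e^{t-1}` (for `t` large) absorbs into `ε (x ln x - c x / 2)` up to a
constant `A`; then every `d < ε / A` works.
-/

open Real

theorem abs_div_tsum_sub_half_le {p : ℕ → ℝ} {ε : ℝ} (hε : ε < 1) (hp : ∀ m, 0 < p m)
    (hstep : ∀ m, |2 * p (m + 1) - p m| ≤ ε * p m) :
    |p 0 / ∑' k, p k - 1 / 2| ≤ ε / 2 := by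
  have hsum : Summable p := by
    refine summable_of_ratio_norm_eventually_le (r := (1 + ε) / 2) (by linarith)
      (Filter.Eventually.of_forall fun m => ?_)
    rw [norm_of_nonneg (hp _).le, norm_of_nonneg (hp _).le]
    linarith [(abs_le.1 (hstep m)).2]
  set S := ∑' k, p k with hS
  have hS_pos : 0 < S := hsum.tsum_pos (fun m => (hp m).le) 0 (hp 0)
  have hshift : Summable fun k => p (k + 1) := (summable_nat_add_iff 1).2 hsum
  have hsum_step : Summable fun k => 2 * p (k + 1) - p k := (hshift.mul_left 2).sub hsum
  have htel : ∑' k, (2 * p (k + 1) - p k) = S - 2 * p 0 := by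
    rw [(hshift.mul_left 2).tsum_sub hsum, tsum_mul_left]
    linarith [hsum.tsum_eq_zero_add]
  have hbound : |S - 2 * p 0| ≤ ε * S := by
    rw [← htel, abs_le, hS, ← tsum_mul_left, ← tsum_neg]
    exact ⟨(hsum.mul_left ε).neg.tsum_le_tsum (fun m => (abs_le.1 (hstep m)).1) hsum_step,
      hsum_step.tsum_le_tsum (fun m => (abs_le.1 (hstep m)).2) (hsum.mul_left ε)⟩
  have hdiff : p 0 / S - 1 / 2 = (2 * p 0 - S) / (2 * S) := by field_simp
  rw [hdiff, abs_div, abs_of_pos (mul_pos two_pos hS_pos), div_le_iff₀ (mul_pos two_pos hS_pos),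
    abs_sub_comm]
  linarith

theorem tsum_ite_le_eq_tsum_add {α : Type*} [AddCommMonoid α] [TopologicalSpace α]
    (f : ℕ+ → α) (l : ℕ+) :
    ∑' l' : ℕ+, (if l ≤ l' then f l' else 0) =
      ∑' k : ℕ, f ((l + k : ℕ).toPNat (by positivity)) := by
  have hinj : Function.Injective fun k : ℕ => ((l + k : ℕ).toPNat (by positivity)) :=
    fun a b hab => Nat.add_left_cancel (congrArg PNat.val hab)
  rw [← hinj.tsum_eq]
  · refine tsum_congr fun k => if_pos ?_
    show (l : ℕ) ≤ l + k
    omega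
  · intro l' hl'
    have hle : (l : ℕ) ≤ l' := not_not.1 fun h => hl' (if_neg h)
    exact ⟨l' - l, PNat.eq (show (l : ℕ) + (l' - l) = l' by omega)⟩

noncomputable def tilt (c x : ℝ) : ℝ := x * log x - c * x / 2

theorem mul_sub_exp_le_mul_log {x : ℝ} (hx : 0 ≤ x) (t : ℝ) :
    x * t - exp (t - 1) ≤ x * log x := by
  rcases hx.eq_or_lt with rfl | hx
  · simp [(exp_pos _).le]
  have h := add_one_le_exp (t - 1 - log x)
  rw [exp_sub, exp_log hx, le_div_iff₀ hx] at h
  linarith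

theorem add_one_mul_log_add_one_sub_mul_log_mem_Icc {x : ℝ} (hx : 1 ≤ x) :
    (x + 1) * log (x + 1) - x * log x ∈ Set.Icc 0 (x + 1) := by
  have hx0 : 0 < x := by linarith
  have hlog_mono : log x ≤ log (x + 1) := log_le_log hx0 (by linarith)
  have hlog_nonneg : 0 ≤ log x := log_nonneg hx
  have hlog_le : log (x + 1) ≤ x := by linarith [log_le_sub_one_of_pos (by linarith : 0 < x + 1)]
  have hincr : x * (log (x + 1) - log x) ≤ 1 := by
    have h := log_le_sub_one_of_pos (div_pos (by linarith : 0 < x + 1) hx0)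
    rw [log_div (by linarith) hx0.ne', div_sub_one hx0.ne', add_sub_cancel_left,
      le_div_iff₀ hx0] at h
    linarith
  constructor <;> nlinarith

theorem abs_tilt_add_one_sub_le (c : ℝ) {x : ℝ} (hx : 1 ≤ x) :
    |tilt c (x + 1) - tilt c x| ≤ x + 1 + |c| / 2 := by
  obtain ⟨h0, h1⟩ := add_one_mul_log_add_one_sub_mul_log_mem_Icc hx
  have heq : tilt c (x + 1) - tilt c x = ((x + 1) * log (x + 1) - x * log x) - c / 2 := by
    unfold tilt; ring
  rw [heq]
  refine (abs_sub _ _).trans ?_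
  rw [abs_of_nonneg h0, abs_div, abs_two]
  linarith

theorem exists_abs_tilt_add_one_sub_le (c : ℝ) {ε : ℝ} (hε : 0 < ε) :
    ∃ A > 0, ∀ x ≥ 1, |tilt c (x + 1) - tilt c x| ≤ A + ε * tilt c x := by
  set t := 1 / ε + |c| / 2
  refine ⟨1 + |c| / 2 + ε * exp (t - 1), by positivity, fun x hx => ?_⟩
  have hfench :=
    mul_le_mul_of_nonneg_left (mul_sub_exp_le_mul_log (by linarith : (0 : ℝ) ≤ x) t) hε.le
  have hεt : ε * (x * t) = x + ε * x * |c| / 2 := by simp only [t]; field_simp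
  have hc : ε * x * c ≤ ε * x * |c| := mul_le_mul_of_nonneg_left (le_abs_self c) (by positivity)
  have hlow : x - ε * exp (t - 1) ≤ ε * tilt c x := by
    unfold tilt
    linarith
  linarith [abs_tilt_add_one_sub_le c hx]

theorem exists_forall_tilt_slowly_varying (c : ℝ) {ε : ℝ} (hε : 0 < ε) :
    ∃ d₀ > 0, ∀ d, 0 < d → d < d₀ → ∀ x ≥ 1,
      0 < 1 + d * tilt c x ∧ |d * (tilt c (x + 1) - tilt c x)| ≤ ε * (1 + d * tilt c x) := by
  obtain ⟨A, hA, hbound⟩ := exists_abs_tilt_add_one_sub_le c hε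
  refine ⟨ε / A, by positivity, fun d hd hdA x hx => ?_⟩
  have hdA' : d * A < ε := by rwa [lt_div_iff₀ hA] at hdA
  have hlt : |d * (tilt c (x + 1) - tilt c x)| < ε * (1 + d * tilt c x) := by
    rw [abs_mul, abs_of_pos hd]
    nlinarith [mul_le_mul_of_nonneg_left (hbound x hx) hd.le]
  exact ⟨pos_of_mul_pos_right ((abs_nonneg _).trans_lt hlt) hε.le, hlt.le⟩

theorem pdag_eq_tilt (d : ℝ) (l : ℕ+) :
    pdag d l = (2 : ℝ) ^ (-((l : ℕ) : ℤ)) * (1 + d * tilt c2 l) :=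
  rfl

theorem abs_two_mul_pdag_add_one_sub_le {d ε : ℝ} (l : ℕ+)
    (h : |d * (tilt c2 (l + 1) - tilt c2 l)| ≤ ε * (1 + d * tilt c2 l)) :
    |2 * pdag d (l + 1) - pdag d l| ≤ ε * pdag d l := by
  have heq : 2 * pdag d (l + 1) - pdag d l
      = (2 : ℝ) ^ (-((l : ℕ) : ℤ)) * (d * (tilt c2 (l + 1) - tilt c2 l)) := by
    simp only [pdag_eq_tilt, PNat.add_coe, PNat.val_ofNat, Nat.cast_add, Nat.cast_one, neg_add]
    rw [zpow_add₀ (by norm_num : (2 : ℝ) ≠ 0), zpow_neg_one]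
    ring
  rw [heq, abs_mul, abs_of_pos (by positivity), pdag_eq_tilt, mul_left_comm]
  exact mul_le_mul_of_nonneg_left h (by positivity)

/-- Lemma 22 of the paper: for all sufficiently small `d`, the hazard rate of
`p†_d` is within `0.05` of `1/2` at every `l ≥ 1`. -/
theorem stmt_13 :
    ∃ d₀ : ℝ, 0 < d₀ ∧
      ∀ d : ℝ, 0 < d → d < d₀ →
        ∀ l : ℕ+,
          |pdag d l / (∑' l' : ℕ+, if l ≤ l' then pdag d l' else 0) - 1 / 2| ≤ 0.05 := by
  obtain ⟨d₀, hd₀, hsmall⟩ := exists_forall_tilt_slowly_varying c2 (ε := 1 / 10) (by norm_num)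
  refine ⟨d₀, hd₀, fun d hd hdd₀ l => ?_⟩
  have hbounds (m : ℕ+) := hsmall d hd hdd₀ m (by exact_mod_cast m.pos)
  rw [tsum_ite_le_eq_tsum_add]
  set q : ℕ → ℕ+ := fun k => (l + k : ℕ).toPNat (by positivity)
  have hq_zero : q 0 = l := PNat.eq rfl
  have hq_succ (k : ℕ) : q (k + 1) = q k + 1 := PNat.eq rfl
  have hhazard :=
    abs_div_tsum_sub_half_le (p := fun k => pdag d (q k)) (ε := 1 / 10) (by norm_num)
      (fun k => by rw [pdag_eq_tilt]; exact mul_pos (by positivity) (hbounds _).1)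
      (fun k => by rw [hq_succ]; exact abs_two_mul_pdag_add_one_sub_le _ (hbounds _).2)
  rw [hq_zero] at hhazard
  exact hhazard.trans_eq (by norm_num)
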